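/- Let (a_n)_{n≥0} be nonnegative reals with ∑_{n=1}^∞ n^{10} a_n < ∞ and set C(x,y) = ∑_{n=0}^∞ a_n T_n(⟨x,y⟩) for x,y ∈ S¹ ⊂ ℝ², where T_n is the Chebyshev polynomial of the first kind. Let x₀ ∈ S¹ and let γ, τ : (−1,1) → S¹ be continuously differentiable curves with γ(0) = τ(0) = x₀, γ'(0) = ξ, τ'(0) = σ. Then the mixed partial derivative ∂²/∂t∂s [C(γ(t), τ(s))] at (t,s) = (0,0) exists and equals (∑_{n=1}^∞ n² a_n) · ⟨ξ, σ⟩. -/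

import Mathlib

/-!
Write `C(x) = ∑ aₙ Tₙ(x)` on `[-1, 1]`. Since `|Tₙ⁽ᵏ⁾| ≤ Tₙ⁽ᵏ⁾(1) ≤ n²ᵏ` there, the decay of `aₙ`
makes `C` and `C'` differentiable termwise within `[-1, 1]`; only one-sided derivatives are
available at `1`, which is exactly the value of `⟪γ t, τ s⟫` at the origin, so termwise
differentiation goes through the second-order Taylor bound
`|p(y) - p(x) - p'(x)(y - x)| ≤ sup |p''| · (y - x)²` rather than through open sets. By the chain
rule `∂ₛ C(⟪γ t, τ s⟫)` at `s = 0` is `C'(⟪γ t, x₀⟫) ⟪γ t, σ⟫`, whose `t`-derivative at `0` is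
`C''(1) ⟪ξ, x₀⟫ ⟪x₀, σ⟫ + C'(1) ⟪ξ, σ⟫`. The first term vanishes because `ξ` is tangent to the
circle at `x₀`, and `C'(1) = ∑ n² aₙ` because `Tₙ'(1) = n²`.
-/

open Set Real Filter Topology Asymptotics Polynomial Polynomial.Chebyshev
open scoped RealInnerProductSpace

namespace Polynomial.Chebyshev

theorem iterate_derivative_T_real_eval_one_le (n : ℤ) (k : ℕ) :
    (derivative^[k] (T ℝ n)).eval 1 ≤ (n : ℝ) ^ (2 * k) := by
  have hnonneg : 0 ≤ (derivative^[k] (T ℝ n)).eval 1 :=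
    (abs_nonneg _).trans (abs_iterate_derivative_T_real_le n k (x := 1) (by norm_num))
  have hden : (1 : ℝ) ≤ ((∏ l ∈ Finset.range k, (2 * l + 1) : ℕ) : ℝ) := by
    exact_mod_cast (Finset.prod_pos fun l _ => by omega : 0 < ∏ l ∈ Finset.range k, (2 * l + 1))
  -- if `|n| < k` the factor `l = |n|` vanishes, otherwise every factor lies in `[0, n ^ 2]`
  have hnum : ∏ l ∈ Finset.range k, (n ^ 2 - (l : ℤ) ^ 2) ≤ n ^ (2 * k) := by
    rw [pow_mul]
    by_cases hk : n.natAbs < k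
    · rw [Finset.prod_eq_zero (Finset.mem_range.2 hk) (by simp [sq_abs])]
      positivity
    · have hsq : ∀ l ∈ Finset.range k, (l : ℤ) ^ 2 ≤ n ^ 2 := fun l hl => by
        rw [← sq_abs n]
        have : (l : ℤ) ≤ |n| := by rw [Finset.mem_range] at hl; rw [Int.abs_eq_natAbs]; omega
        gcongr
      calc _ ≤ ∏ _l ∈ Finset.range k, n ^ 2 :=
            Finset.prod_le_prod (fun l hl => sub_nonneg.2 (hsq l hl))
              (fun l _ => sub_le_self _ (sq_nonneg _))
        _ = (n ^ 2) ^ k := by simp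
  have hnum' : ((∏ l ∈ Finset.range k, (n ^ 2 - (l : ℤ) ^ 2) : ℤ) : ℝ) ≤ (n : ℝ) ^ (2 * k) := by
    exact_mod_cast hnum
  have h := iterate_derivative_T_eval_one (R := ℝ) n k
  push_cast at h hden hnum'
  nlinarith [mul_le_mul_of_nonneg_right hden hnonneg]

theorem abs_iterate_derivative_T_real_le_pow (n : ℤ) (k : ℕ) {x : ℝ} (hx : |x| ≤ 1) :
    |(derivative^[k] (T ℝ n)).eval x| ≤ (n : ℝ) ^ (2 * k) :=
  (abs_iterate_derivative_T_real_le n k hx).trans (iterate_derivative_T_real_eval_one_le n k)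

end Polynomial.Chebyshev

theorem hasDerivWithinAt_of_abs_sub_sub_le_mul_sq {f : ℝ → ℝ} {s : Set ℝ} {x f' M : ℝ}
    (h : ∀ y ∈ s, |f y - f x - f' * (y - x)| ≤ M * (y - x) ^ 2) :
    HasDerivWithinAt f f' s x := by
  rw [hasDerivWithinAt_iff_isLittleO]
  have hO : (fun y => f y - f x - (y - x) • f') =O[𝓝[s] x] fun y => ‖y - x‖ ^ 2 :=
    IsBigO.of_bound M <| eventually_nhdsWithin_of_forall fun y hy => by
      simpa [mul_comm f'] using h y hy
  exact hO.trans_isLittleO ((isLittleO_pow_sub_sub x one_lt_two).mono nhdsWithin_le_nhds)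

theorem Polynomial.abs_eval_sub_sub_le_mul_sq {p : ℝ[X]} {s : Set ℝ} (hs : Convex ℝ s) {M : ℝ}
    (hM : ∀ z ∈ s, |(derivative (derivative p)).eval z| ≤ M) {x y : ℝ} (hx : x ∈ s)
    (hy : y ∈ s) :
    |p.eval y - p.eval x - (derivative p).eval x * (y - x)| ≤ M * (y - x) ^ 2 := by
  have hlip : ∀ z ∈ s, |(derivative p).eval z - (derivative p).eval x| ≤ M * |z - x| :=
    fun z hz => hs.norm_image_sub_le_of_norm_deriv_le
      (fun w _ => (derivative p).differentiableAt) (fun w hw => by simpa using hM w hw) hx hz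
  have hM0 : 0 ≤ M := (abs_nonneg _).trans (hM x hx)
  have hφ := (convex_uIcc x y).norm_image_sub_le_of_norm_hasDerivWithin_le
    (f := fun z => p.eval z - (derivative p).eval x * z)
    (f' := fun z => (derivative p).eval z - (derivative p).eval x) (C := M * |y - x|)
    (fun w _ => (((p.hasDerivAt w).sub ((hasDerivAt_id' w).const_mul
      ((derivative p).eval x))).congr_deriv (by ring)).hasDerivWithinAt)
    (fun w hw => (hlip w (hs.ordConnected.uIcc_subset hx hy hw)).trans
      (mul_le_mul_of_nonneg_left (abs_sub_left_of_mem_uIcc hw) hM0))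
    left_mem_uIcc right_mem_uIcc
  calc |p.eval y - p.eval x - (derivative p).eval x * (y - x)|
      = ‖(p.eval y - (derivative p).eval x * y) - (p.eval x - (derivative p).eval x * x)‖ := by
        rw [Real.norm_eq_abs]; ring_nf
    _ ≤ M * |y - x| * ‖y - x‖ := hφ
    _ = M * (y - x) ^ 2 := by rw [Real.norm_eq_abs, mul_assoc, abs_mul_abs_self, sq]

theorem hasDerivWithinAt_tsum_mul_eval {P : ℕ → ℝ[X]} {a M : ℕ → ℝ} {s : Set ℝ}
    (hs : Convex ℝ s) (hM : ∀ n, ∀ z ∈ s, |(derivative (derivative (P n))).eval z| ≤ M n)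
    (hMsum : Summable fun n => |a n| * M n) (hP : ∀ z ∈ s, Summable fun n => a n * (P n).eval z)
    {x : ℝ} (hP' : Summable fun n => a n * (derivative (P n)).eval x) (hx : x ∈ s) :
    HasDerivWithinAt (fun z => ∑' n, a n * (P n).eval z)
      (∑' n, a n * (derivative (P n)).eval x) s x := by
  refine hasDerivWithinAt_of_abs_sub_sub_le_mul_sq (M := ∑' n, |a n| * M n) fun y hy => ?_
  have hsum := ((hP y hy).hasSum.sub (hP x hx).hasSum).sub (hP'.hasSum.mul_right (y - x))
  refine hsum.norm_le_of_bounded (hMsum.hasSum.mul_right ((y - x) ^ 2)) fun n => ?_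
  calc |a n * (P n).eval y - a n * (P n).eval x - a n * (derivative (P n)).eval x * (y - x)|
      = |a n| * |(P n).eval y - (P n).eval x - (derivative (P n)).eval x * (y - x)| := by
        rw [← abs_mul]; ring_nf
    _ ≤ |a n| * M n * (y - x) ^ 2 := by
        rw [mul_assoc]
        exact mul_le_mul_of_nonneg_left ((P n).abs_eval_sub_sub_le_mul_sq hs (hM n) hx hy)
          (abs_nonneg _)

theorem summable_pow_mul_of_le {a : ℕ → ℝ} {j m : ℕ} (hjm : j ≤ m)
    (h : Summable fun n : ℕ => (n : ℝ) ^ m * a n) : Summable fun n : ℕ => (n : ℝ) ^ j * a n :=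
  h.abs.of_norm_bounded_eventually_nat <| eventually_atTop.2 ⟨1, fun n hn => by
    simp only [Real.norm_eq_abs, abs_mul, abs_pow, Nat.abs_cast]
    exact mul_le_mul_of_nonneg_right (pow_le_pow_right₀ (mod_cast hn) hjm) (abs_nonneg _)⟩

/-- The `k`-th termwise derivative of `x ↦ ∑ aₙ Tₙ(x)`, so that
`C(x, y) = chebyshevSeries a 0 ⟪x, y⟫`. -/
noncomputable def chebyshevSeries (a : ℕ → ℝ) (k : ℕ) (x : ℝ) : ℝ :=
  ∑' n : ℕ, a n * (derivative^[k] (T ℝ n)).eval x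

theorem summable_mul_eval_iterate_derivative_T {a : ℕ → ℝ} {k : ℕ}
    (h : Summable fun n : ℕ => (n : ℝ) ^ (2 * k) * a n) {x : ℝ} (hx : x ∈ Icc (-1 : ℝ) 1) :
    Summable fun n : ℕ => a n * (derivative^[k] (T ℝ n)).eval x :=
  h.abs.of_norm_bounded fun n => by
    simp only [Real.norm_eq_abs, abs_mul, abs_pow, Nat.abs_cast]
    rw [mul_comm]
    gcongr
    exact_mod_cast abs_iterate_derivative_T_real_le_pow n k (abs_le.2 hx)

theorem hasDerivWithinAt_chebyshevSeries {a : ℕ → ℝ} {k : ℕ}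
    (h : Summable fun n : ℕ => (n : ℝ) ^ (2 * (k + 2)) * a n) {x : ℝ}
    (hx : x ∈ Icc (-1 : ℝ) 1) :
    HasDerivWithinAt (chebyshevSeries a k) (chebyshevSeries a (k + 1) x) (Icc (-1) 1) x := by
  have hiter : ∀ (j : ℕ) (p : ℝ[X]), derivative^[j + 1] p = derivative (derivative^[j] p) :=
    fun j p => Function.iterate_succ_apply' _ _ _
  have hsum : ∀ j ≤ k + 2, ∀ y ∈ Icc (-1 : ℝ) 1,
      Summable fun n : ℕ => a n * (derivative^[j] (T ℝ n)).eval y := fun j hj y hy =>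
    summable_mul_eval_iterate_derivative_T (summable_pow_mul_of_le (by omega) h) hy
  have := hasDerivWithinAt_tsum_mul_eval (P := fun n : ℕ => derivative^[k] (T ℝ n))
    (M := fun n : ℕ => (n : ℝ) ^ (2 * (k + 2))) (convex_Icc (-1) 1)
    (fun n z hz => by
      rw [← hiter, ← hiter]
      exact_mod_cast abs_iterate_derivative_T_real_le_pow n (k + 2) (abs_le.2 hz))
    (by simpa only [abs_mul, abs_pow, Nat.abs_cast, mul_comm] using h.abs) (hsum k (by omega))
    (by simpa only [← hiter] using hsum (k + 1) (by omega) x hx) hx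
  simp only [← hiter] at this
  exact this

theorem chebyshevSeries_one_one (a : ℕ → ℝ) :
    chebyshevSeries a 1 1 = ∑' n : ℕ, (n : ℝ) ^ 2 * a n := by
  simp [chebyshevSeries, derivative_T_eval_one, mul_comm]

section Sphere

variable {F : Type*} [NormedAddCommGroup F] [InnerProductSpace ℝ F]

theorem real_inner_mem_Icc_of_mem_sphere {x y : F} (hx : x ∈ Metric.sphere (0 : F) 1)
    (hy : y ∈ Metric.sphere (0 : F) 1) : ⟪x, y⟫ ∈ Icc (-1 : ℝ) 1 := by
  rw [mem_sphere_zero_iff_norm] at hx hy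
  exact abs_le.1 ((abs_real_inner_le_norm x y).trans (by rw [hx, hy, one_mul]))

theorem real_inner_eq_zero_of_hasDerivAt_of_eventually_norm_eq {γ : ℝ → F} {ξ : F} {t₀ r : ℝ}
    (hγ : HasDerivAt γ ξ t₀) (hr : ∀ᶠ t in 𝓝 t₀, ‖γ t‖ = r) : ⟪γ t₀, ξ⟫ = 0 := by
  have hconst : HasDerivAt (‖γ ·‖ ^ 2) 0 t₀ :=
    (hasDerivAt_const t₀ (r ^ 2)).congr_of_eventuallyEq (hr.mono fun t ht => by simp [ht])
  simpa using hγ.norm_sq.unique hconst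

end Sphere

theorem induced_metric_chebyshev_series_general (a : ℕ → ℝ)
    (hsum : Summable fun n : ℕ => (n : ℝ) ^ 10 * a n)
    (x₀ ξ σ : EuclideanSpace ℝ (Fin 2))
    (γ τ : ℝ → EuclideanSpace ℝ (Fin 2))
    (hγS : ∀ t ∈ Ioo (-1 : ℝ) 1, γ t ∈ Metric.sphere (0 : EuclideanSpace ℝ (Fin 2)) 1)
    (hτS : ∀ s ∈ Ioo (-1 : ℝ) 1, τ s ∈ Metric.sphere (0 : EuclideanSpace ℝ (Fin 2)) 1)
    (hγ0 : γ 0 = x₀) (hτ0 : τ 0 = x₀)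
    (hξ : HasDerivAt γ ξ 0) (hσ : HasDerivAt τ σ 0) :
    ∃ g : ℝ → ℝ,
      (∀ t ∈ Ioo (-1 : ℝ) 1,
        HasDerivAt
          (fun s : ℝ => ∑' n : ℕ, a n * (Polynomial.Chebyshev.T ℝ n).eval ⟪γ t, τ s⟫)
          (g t) 0) ∧
      HasDerivAt g ((∑' n : ℕ, (n : ℝ) ^ 2 * a n) * ⟪ξ, σ⟫) 0 := by
  have hnhds : Ioo (-1 : ℝ) 1 ∈ 𝓝 0 := Ioo_mem_nhds (by norm_num) (by norm_num)
  have hγS' : ∀ᶠ t in 𝓝 0, γ t ∈ Metric.sphere (0 : EuclideanSpace ℝ (Fin 2)) 1 :=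
    mem_of_superset hnhds hγS
  have hτS' : ∀ᶠ s in 𝓝 0, τ s ∈ Metric.sphere (0 : EuclideanSpace ℝ (Fin 2)) 1 :=
    mem_of_superset hnhds hτS
  have hx₀ : x₀ ∈ Metric.sphere 0 1 := hγ0 ▸ hγS 0 (mem_of_mem_nhds hnhds)
  have hx₀x₀ : ⟪x₀, x₀⟫ = 1 := by
    rw [real_inner_self_eq_norm_sq, mem_sphere_zero_iff_norm.1 hx₀, one_pow]
  have hξx₀ : ⟪ξ, x₀⟫ = 0 := by
    rw [real_inner_comm, ← hγ0]
    exact real_inner_eq_zero_of_hasDerivAt_of_eventually_norm_eq hξ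
      (hγS'.mono fun t ht => mem_sphere_zero_iff_norm.1 ht)
  refine ⟨fun t => chebyshevSeries a 1 ⟪γ t, x₀⟫ * ⟪γ t, σ⟫, fun t ht => ?_, ?_⟩
  · have hin : HasDerivAt (fun s => ⟪γ t, τ s⟫) ⟪γ t, σ⟫ 0 := by
      simpa using (hasDerivAt_const 0 (γ t)).inner ℝ hσ
    exact (hasDerivWithinAt_chebyshevSeries (k := 0) (summable_pow_mul_of_le (by norm_num) hsum)
      (real_inner_mem_Icc_of_mem_sphere (hγS t ht) hx₀)).comp_hasDerivAt_of_eq 0 hin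
      (hτS'.mono fun s hs => real_inner_mem_Icc_of_mem_sphere (hγS t ht) hs) (by rw [hτ0])
  · have hin : ∀ v, HasDerivAt (fun t => ⟪γ t, v⟫) ⟪ξ, v⟫ 0 := fun v => by
      simpa using hξ.inner ℝ (hasDerivAt_const 0 v)
    have hC := (hasDerivWithinAt_chebyshevSeries (k := 1) (summable_pow_mul_of_le (by norm_num)
      hsum) (real_inner_mem_Icc_of_mem_sphere (hγS'.self_of_nhds) hx₀)).comp_hasDerivAt 0
      (hin x₀) (hγS'.mono fun t ht => real_inner_mem_Icc_of_mem_sphere ht hx₀)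
    refine (hC.mul (hin σ)).congr_deriv ?_
    simp only [Function.comp_apply, hγ0, hx₀x₀, hξx₀, chebyshevSeries_one_one]
    ring

/-- Let `(a_n)` be nonnegative reals with `∑ n^{10} a_n < ∞` and set
`C(x,y) = ∑ a_n T_n(⟨x,y⟩)` for `x,y ∈ S¹ ⊂ ℝ²`, where `T_n` is the Chebyshev polynomial
of the first kind. Let `x₀ ∈ S¹` and let `γ, τ : (−1,1) → S¹` be continuously
differentiable curves with `γ(0) = τ(0) = x₀`, `γ'(0) = ξ`, `τ'(0) = σ`. Then the mixed
partial derivative `∂²/∂t∂s [C(γ(t), τ(s))]` at `(t,s) = (0,0)` exists and equals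
`(∑_{n≥1} n² a_n) · ⟨ξ, σ⟩`. -/
theorem induced_metric_chebyshev_series (a : ℕ → ℝ) (ha : ∀ n, 0 ≤ a n)
    (hsum : Summable fun n : ℕ => (n : ℝ) ^ 10 * a n)
    (x₀ ξ σ : EuclideanSpace ℝ (Fin 2))
    (hx₀ : x₀ ∈ Metric.sphere (0 : EuclideanSpace ℝ (Fin 2)) 1)
    (γ τ : ℝ → EuclideanSpace ℝ (Fin 2))
    (hγS : ∀ t ∈ Ioo (-1 : ℝ) 1, γ t ∈ Metric.sphere (0 : EuclideanSpace ℝ (Fin 2)) 1)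
    (hτS : ∀ s ∈ Ioo (-1 : ℝ) 1, τ s ∈ Metric.sphere (0 : EuclideanSpace ℝ (Fin 2)) 1)
    (hγ1 : ContDiffOn ℝ 1 γ (Ioo (-1 : ℝ) 1)) (hτ1 : ContDiffOn ℝ 1 τ (Ioo (-1 : ℝ) 1))
    (hγ0 : γ 0 = x₀) (hτ0 : τ 0 = x₀)
    (hξ : HasDerivAt γ ξ 0) (hσ : HasDerivAt τ σ 0) :
    ∃ g : ℝ → ℝ,
      (∀ t ∈ Ioo (-1 : ℝ) 1,
        HasDerivAt
          (fun s : ℝ => ∑' n : ℕ, a n * (Polynomial.Chebyshev.T ℝ n).eval ⟪γ t, τ s⟫)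
          (g t) 0) ∧
      HasDerivAt g ((∑' n : ℕ, (n : ℝ) ^ 2 * a n) * ⟪ξ, σ⟫) 0 :=
  induced_metric_chebyshev_series_general a hsum x₀ ξ σ γ τ hγS hτS hγ0 hτ0 hξ hσ
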